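/- arXiv:math/0606793 — 2 statements merged into one kernel-verified Lean document; each statement's English description precedes it below -/
import Mathlib

section
/- For all real numbers h₁₁, h₂₂, h₃₃, h₁₂, h₁₃, h₂₃, define Q = 16h₁₁² + h₂₂² + h₃₃² + 8h₁₂² + 8h₁₃² + 6h₂₃² + (h₂₂ − h₃₃)² + 4h₁₁(h₂₂ + h₃₃). Then Q ≥ ω · (4h₁₁² + h₂₂² + h₃₃² + 4h₁₂² + 4h₁₃² + 2h₂₃²), where ω = (5 − √17)/2 > 0. -/
/-- Algebraic core of Proposition `StableSol` (strict linear stability at the sol³ soliton,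
with ω = (5 − √17)/2 > 0). -/
theorem stableSol_quadratic (h11 h22 h33 h12 h13 h23 Q ω : ℝ)
    (hQ : Q = 16 * h11^2 + h22^2 + h33^2 + 8 * h12^2 + 8 * h13^2 + 6 * h23^2
        + (h22 - h33)^2 + 4 * h11 * (h22 + h33))
    (hω : ω = (5 - Real.sqrt 17) / 2) :
    0 < ω ∧
    Q ≥ ω * (4 * h11^2 + h22^2 + h33^2 + 4 * h12^2 + 4 * h13^2 + 2 * h23^2) := by
  have hs : Real.sqrt 17 ^ 2 = 17 := Real.sq_sqrt (by norm_num)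
  have hs4 : Real.sqrt 17 < 5 := by
    nlinarith [Real.sqrt_nonneg 17]
  have hs3 : (4 : ℝ) < Real.sqrt 17 := by
    nlinarith [Real.sqrt_nonneg 17]
  constructor
  · rw [hω]; linarith
  · subst hQ hω
    nlinarith [sq_nonneg ((3 + Real.sqrt 17) * h11 + (h22 + h33)),
      sq_nonneg (h22 - h33), sq_nonneg h12, sq_nonneg h13, sq_nonneg h23,
      sq_nonneg h11, Real.sqrt_nonneg 17]
end

section
/- For all real numbers h₁₁, h₂₂, h₃₃, h₄₄, h₁₂, h₁₃, h₁₄, h₂₃, h₂₄, h₃₄, define Q = −3h₁₁² − 2h₂₂² − h₃₃² − 4h₄₄² − 6h₁₂² − 4h₁₃² − 4h₁₄² − 4h₂₃² − 4h₂₄² − 6h₃₄² + h₁₁h₂₂ − 3h₁₁h₄₄ − 2h₁₂h₂₃ + 2h₁₃h₂₂ − 2h₁₃h₄₄ + 2h₁₄h₃₄ + h₂₂h₃₃ − 2h₂₂h₄₄ + h₃₃h₄₄. Then Q ≤ −0.0057 · (h₁₁² + h₂₂² + h₃₃² + h₄₄² + 2h₁₂² + 2h₁₃² + 2h₁₄²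 + 2h₂₃² + 2h₂₄² + 2h₃₄²). -/
/-- Algebraic core of Proposition `Stable4` (strict linear stability at the nil⁴ soliton,
with ω > 0.0057). -/
theorem stable4_quadratic (h11 h22 h33 h44 h12 h13 h14 h23 h24 h34 Q : ℝ)
    (hQ : Q = -3 * h11^2 - 2 * h22^2 - h33^2 - 4 * h44^2 - 6 * h12^2 - 4 * h13^2
        - 4 * h14^2 - 4 * h23^2 - 4 * h24^2 - 6 * h34^2
        + h11 * h22 - 3 * h11 * h44 - 2 * h12 * h23 + 2 * h13 * h22 - 2 * h13 * h44
        + 2 * h14 * h34 + h22 * h33 - 2 * h22 * h44 + h33 * h44) :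
    Q ≤ -(0.0057 : ℝ) * (h11^2 + h22^2 + h33^2 + h44^2
        + 2 * h12^2 + 2 * h13^2 + 2 * h14^2 + 2 * h23^2 + 2 * h24^2 + 2 * h34^2) := by
  have key : -(0.0057 : ℝ) * (h11^2 + h22^2 + h33^2 + h44^2
        + 2 * h12^2 + 2 * h13^2 + 2 * h14^2 + 2 * h23^2 + 2 * h24^2 + 2 * h34^2) - Q =
      (1:ℝ)/299430000 * (29943*h11 - 5000*h22 + 15000*h44)^2 + (1:ℝ)/171319847348070000 * (572153249*h22 - 149715000*h33 + 374430000*h44 - 299430000*h13)^2 + (1:ℝ)/28266343026429334179430000 * (4940344754807*h33 - 988616245000*h44 - 1497150000000*h13)^2 + (1:ℝ)/5833166496607836410981123468070000 * (118072053391256001*h44 + 79147272448070000*h13)^2 + (1:ℝ)/149715000 * (29943*h12 + 5000*h23)^2 + (1364944987301118427943:ℝ)/590360266956280005000 * h13^2 + (1:ℝ)/99715000 * (19943*h14 - 5000*h34)^2 + (572153249:ℝ)/149715000 * h23^2 + (19943:ℝ)/5000 * h24^2 + (572153249:ℝ)/99715000 * h34^2 := by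
    rw [hQ]; ring
  nlinarith [sq_nonneg (29943*h11 - 5000*h22 + 15000*h44),
    sq_nonneg (572153249*h22 - 149715000*h33 + 374430000*h44 - 299430000*h13),
    sq_nonneg (4940344754807*h33 - 988616245000*h44 - 1497150000000*h13),
    sq_nonneg (118072053391256001*h44 + 79147272448070000*h13),
    sq_nonneg (29943*h12 + 5000*h23), sq_nonneg h13,
    sq_nonneg (19943*h14 - 5000*h34), sq_nonneg h23, sq_nonneg h24, sq_nonneg h34, key]
end
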